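/- Assume α < (2^{1/(2N)} − 1)/L, so that 2 − (1 + αL)^{2N} > 0. Assume the bounded-variance condition ∫_I ‖∇l_{Tᵢ}(w) − ∇l_T(w)‖² dμ(i) ≤ σ² for every w ∈ ℝ^d, where ∇l_T(w) = ∫_I ∇l_{Tᵢ}(w) dμ(i), and assume ‖∇l_{Sᵢ}(v) − ∇l_{Tᵢ}(v)‖ ≤ bᵢ for each i and all v; set b = ∫_I bᵢ dμ(i) and b̃ = ∫_I bᵢ² dμ(i). Define A₁ = 4(1 + αL)^{4N} / (2 − (1 + αL)^{2N})², A₂ = 4(1 + αL)^{8N} (σ + b)² / (2 − (1 + αL)^{2N})² + 2(1 + αL)^{4N} (σ² + b̃), and ∇𝓛(w) = ∫_I Gᵢ(w) dμ(i). Then for every w ∈ ℝ^d, ∫_I ‖Gᵢ(w)‖² dμ(i) ≤ A₁ ‖∇𝓛(w)‖² + A₂. -/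

import Mathlib

open MeasureTheory

noncomputable def innerPath {d : ℕ} (α : ℝ) (l : EuclideanSpace ℝ (Fin d) → ℝ) :
    ℕ → EuclideanSpace ℝ (Fin d) → EuclideanSpace ℝ (Fin d)
  | 0, w => w
  | j + 1, w => innerPath α l j w - α • gradient l (innerPath α l j w)

noncomputable def hessProd {d : ℕ} (α : ℝ) (N : ℕ)
    (lS : EuclideanSpace ℝ (Fin d) → ℝ) (w : EuclideanSpace ℝ (Fin d)) :
    EuclideanSpace ℝ (Fin d) →L[ℝ] EuclideanSpace ℝ (Fin d) :=
  ((List.range N).map fun j =>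
    ContinuousLinearMap.id ℝ (EuclideanSpace ℝ (Fin d)) -
      α • fderiv ℝ (gradient lS) (innerPath α lS j w)).prod

noncomputable def metaGrad {d : ℕ} (α : ℝ) (N : ℕ)
    (lS lT : EuclideanSpace ℝ (Fin d) → ℝ) (w : EuclideanSpace ℝ (Fin d)) :
    EuclideanSpace ℝ (Fin d) :=
  hessProd α N lS w (gradient lT (innerPath α lS N w))

/-!
Write `q = (1 + αL)^(2N)`. Each factor `I - α∇²l_{Sᵢ}` is within `αL` of the identity and each
inner step moves the gradient by at most a factor `1 + αL`, so the meta gradient `Gᵢ(w)` differs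
from `∇l_{Tᵢ}(w)` by at most `(q - 1)(‖∇l_{Tᵢ}(w)‖ + bᵢ)`. Averaging this relative perturbation
bound, and using the variance bound to compare `∫ ‖∇l_{Tᵢ}(w)‖` with `‖∇l_T(w)‖`, gives
`(2 - q) ‖∇l_T(w)‖ ≤ ‖∇𝓛(w)‖ + (q - 1)(σ + b)`; since `q < 2` this controls `‖∇l_T(w)‖` by
`‖∇𝓛(w)‖`, and the second moment of `Gᵢ(w)` is at most `2q²(‖∇l_T(w)‖² + σ² + b̃)`.
-/

open ProbabilityTheory

lemma norm_list_prod_sub_one_le {R : Type*} [SeminormedRing R] {c : ℝ} (l : List R)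
    (hl : ∀ x ∈ l, ‖x - 1‖ ≤ c) : ‖l.prod - 1‖ ≤ (1 + c) ^ l.length - 1 := by
  induction l with
  | nil => simp
  | cons a l ih =>
    have ha := hl a List.mem_cons_self
    have hprod := ih fun x hx => hl x (List.mem_cons_of_mem a hx)
    have hc : 0 ≤ c := (norm_nonneg _).trans ha
    calc ‖(a :: l).prod - 1‖ = ‖(a - 1) * (l.prod - 1) + (a - 1) + (l.prod - 1)‖ := by
          rw [List.prod_cons]; congr 1; noncomm_ring
      _ ≤ ‖a - 1‖ * ‖l.prod - 1‖ + ‖a - 1‖ + ‖l.prod - 1‖ :=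
          (norm_add₃_le).trans (by gcongr; exact norm_mul_le _ _)
      _ ≤ c * ((1 + c) ^ l.length - 1) + c + ((1 + c) ^ l.length - 1) := by gcongr
      _ = (1 + c) ^ (a :: l).length - 1 := by rw [List.length_cons, pow_succ]; ring

section InnerLoop

variable {d N : ℕ} {α L : ℝ}

lemma norm_fderiv_le_of_norm_sub_le {E F : Type*} [NormedAddCommGroup E] [NormedSpace ℝ E]
    [NormedAddCommGroup F] [NormedSpace ℝ F] {g : E → F} (hL : 0 ≤ L)
    (hg : ∀ w u, ‖g w - g u‖ ≤ L * ‖w - u‖) (v : E) : ‖fderiv ℝ g v‖ ≤ L := by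
  have hlip : LipschitzWith L.toNNReal g := LipschitzWith.of_dist_le_mul fun x y => by
    rw [dist_eq_norm, dist_eq_norm, Real.coe_toNNReal L hL]
    exact hg x y
  simpa [Real.coe_toNNReal L hL] using norm_fderiv_le_of_lipschitz ℝ (x₀ := v) hlip

variable {f : EuclideanSpace ℝ (Fin d) → ℝ}

lemma norm_hessProd_sub_one_le (hα : 0 ≤ α) (hL : 0 ≤ L)
    (hf : ∀ w u, ‖gradient f w - gradient f u‖ ≤ L * ‖w - u‖) (w : EuclideanSpace ℝ (Fin d)) :
    ‖hessProd α N f w - 1‖ ≤ (1 + α * L) ^ N - 1 := by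
  have hfactor : ∀ v, ‖(1 - α • fderiv ℝ (gradient f) v) - 1‖ ≤ α * L := fun v => by
    rw [sub_sub_cancel_left, norm_neg, norm_smul, Real.norm_of_nonneg hα]
    exact mul_le_mul_of_nonneg_left (norm_fderiv_le_of_norm_sub_le hL hf v) hα
  refine (norm_list_prod_sub_one_le (c := α * L) _ fun x hx => ?_).trans_eq (by simp)
  obtain ⟨j, -, rfl⟩ := List.mem_map.1 hx
  exact hfactor _

lemma norm_gradient_innerPath_le (hα : 0 ≤ α) (hL : 0 ≤ L)
    (hf : ∀ w u, ‖gradient f w - gradient f u‖ ≤ L * ‖w - u‖) (w : EuclideanSpace ℝ (Fin d))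
    (j : ℕ) : ‖gradient f (innerPath α f j w)‖ ≤ (1 + α * L) ^ j * ‖gradient f w‖ := by
  induction j with
  | zero => simp [innerPath]
  | succ j ih =>
    set x := innerPath α f j w
    have hstep : ‖gradient f (x - α • gradient f x) - gradient f x‖ ≤ α * L * ‖gradient f x‖ := by
      simpa [norm_smul, Real.norm_of_nonneg hα, mul_comm, mul_left_comm, mul_assoc] using
        hf (x - α • gradient f x) x
    calc ‖gradient f (innerPath α f (j + 1) w)‖
        ≤ ‖gradient f x‖ + ‖gradient f (x - α • gradient f x) - gradient f x‖ :=
          norm_le_norm_add_norm_sub' _ _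
      _ ≤ (1 + α * L) * ‖gradient f x‖ := by linarith
      _ ≤ (1 + α * L) * ((1 + α * L) ^ j * ‖gradient f w‖) := by gcongr
      _ = (1 + α * L) ^ (j + 1) * ‖gradient f w‖ := by ring

lemma mul_norm_innerPath_sub_le (hα : 0 ≤ α) (hL : 0 ≤ L)
    (hf : ∀ w u, ‖gradient f w - gradient f u‖ ≤ L * ‖w - u‖) (w : EuclideanSpace ℝ (Fin d))
    (j : ℕ) : L * ‖innerPath α f j w - w‖ ≤ ((1 + α * L) ^ j - 1) * ‖gradient f w‖ := by
  induction j with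
  | zero => simp [innerPath]
  | succ j ih =>
    set x := innerPath α f j w
    have hmove : ‖innerPath α f (j + 1) w - w‖ ≤ ‖x - w‖ + α * ‖gradient f x‖ := by
      calc ‖innerPath α f (j + 1) w - w‖ = ‖(x - w) - α • gradient f x‖ := by
            rw [innerPath]; congr 1; abel
        _ ≤ ‖x - w‖ + α * ‖gradient f x‖ := by
            simpa [norm_smul, Real.norm_of_nonneg hα] using norm_sub_le (x - w) (α • gradient f x)
    have hgrad := norm_gradient_innerPath_le hα hL hf w j
    calc L * ‖innerPath α f (j + 1) w - w‖ ≤ L * ‖x - w‖ + α * L * ‖gradient f x‖ := by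
          nlinarith
      _ ≤ ((1 + α * L) ^ j - 1) * ‖gradient f w‖ +
            α * L * ((1 + α * L) ^ j * ‖gradient f w‖) := by gcongr
      _ = ((1 + α * L) ^ (j + 1) - 1) * ‖gradient f w‖ := by ring

lemma norm_metaGrad_sub_gradient_le {lS lT : EuclideanSpace ℝ (Fin d) → ℝ} {β : ℝ}
    (hα : 0 ≤ α) (hL : 0 ≤ L)
    (hS : ∀ w u, ‖gradient lS w - gradient lS u‖ ≤ L * ‖w - u‖)
    (hT : ∀ w u, ‖gradient lT w - gradient lT u‖ ≤ L * ‖w - u‖) (w : EuclideanSpace ℝ (Fin d))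
    (hβ : ‖gradient lS w - gradient lT w‖ ≤ β) :
    ‖metaGrad α N lS lT w - gradient lT w‖ ≤
      ((1 + α * L) ^ (2 * N) - 1) * (‖gradient lT w‖ + β) := by
  set r := (1 + α * L) ^ N
  set y := gradient lT (innerPath α lS N w)
  set s := ‖gradient lT w‖ + β
  have hr : 1 ≤ r := one_le_pow₀ (le_add_of_nonneg_right (mul_nonneg hα hL))
  have hβ0 : 0 ≤ β := (norm_nonneg _).trans hβ
  have hshift : ‖y - gradient lT w‖ ≤ (r - 1) * s :=
    calc ‖y - gradient lT w‖ ≤ L * ‖innerPath α lS N w - w‖ := hT _ _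
      _ ≤ (r - 1) * ‖gradient lS w‖ := mul_norm_innerPath_sub_le hα hL hS w N
      _ ≤ (r - 1) * s := mul_le_mul_of_nonneg_left
          (by linarith [norm_le_norm_add_norm_sub' (gradient lS w) (gradient lT w)])
          (by linarith)
  have hy : ‖y‖ ≤ r * s := by
    linarith [norm_le_norm_add_norm_sub' y (gradient lT w)]
  calc ‖metaGrad α N lS lT w - gradient lT w‖
      = ‖(hessProd α N lS w - 1) y + (y - gradient lT w)‖ := by
        congr 1
        show hessProd α N lS w y - gradient lT w = (hessProd α N lS w y - y) + (y - gradient lT w)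
        abel
    _ ≤ ‖hessProd α N lS w - 1‖ * ‖y‖ + ‖y - gradient lT w‖ :=
        norm_add_le_of_le (ContinuousLinearMap.le_opNorm _ _) le_rfl
    _ ≤ (r - 1) * (r * s) + (r - 1) * s :=
        add_le_add (mul_le_mul (norm_hessProd_sub_one_le hα hL hS w) hy (norm_nonneg _)
          (by linarith)) hshift
    _ = ((1 + α * L) ^ (2 * N) - 1) * s := by rw [pow_mul']; ring

end InnerLoop

section Moments

variable {I E : Type*} [MeasurableSpace I] {μ : Measure I} [NormedAddCommGroup E]

lemma sq_integral_le_integral_sq [IsProbabilityMeasure μ] {f : I → ℝ} (hf : MemLp f 2 μ) :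
    (∫ i, f i ∂μ) ^ 2 ≤ ∫ i, f i ^ 2 ∂μ := by
  have h := variance_nonneg f μ
  rw [variance_eq_sub hf] at h
  simpa using h

lemma integral_norm_sub_integral_sq [IsProbabilityMeasure μ] [InnerProductSpace ℝ E]
    [CompleteSpace E] {X : I → E} (hX : MemLp X 2 μ) :
    ∫ i, ‖X i - ∫ j, X j ∂μ‖ ^ 2 ∂μ = ∫ i, ‖X i‖ ^ 2 ∂μ - ‖∫ i, X i ∂μ‖ ^ 2 := by
  set m := ∫ i, X i ∂μ with hm
  have hX1 : Integrable X μ := hX.integrable one_le_two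
  have hX2 : Integrable (fun i => ‖X i‖ ^ 2) μ := hX.integrable_norm_pow two_ne_zero
  have hinner : Integrable (fun i => 2 * inner ℝ m (X i)) μ := by
    simpa only [real_inner_comm] using (hX1.inner_const m).const_mul 2
  calc ∫ i, ‖X i - m‖ ^ 2 ∂μ = ∫ i, (‖X i‖ ^ 2 - 2 * inner ℝ m (X i) + ‖m‖ ^ 2) ∂μ := by
        congr with i; rw [norm_sub_sq_real, real_inner_comm]
    _ = ∫ i, ‖X i‖ ^ 2 ∂μ - ‖m‖ ^ 2 := by
        have hdiff : Integrable (fun i => ‖X i‖ ^ 2 - 2 * inner ℝ m (X i)) μ := hX2.sub hinner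
        rw [integral_add hdiff (integrable_const _), integral_sub hX2 hinner,
          integral_const_mul, integral_inner hX1, ← hm, real_inner_self_eq_norm_sq]
        simp only [integral_const, probReal_univ, one_smul]
        ring

lemma integral_norm_le_norm_integral_add [IsProbabilityMeasure μ] [NormedSpace ℝ E] {X : I → E}
    {σ : ℝ} (hX : MemLp X 2 μ) (hσ : 0 ≤ σ)
    (hvar : ∫ i, ‖X i - ∫ j, X j ∂μ‖ ^ 2 ∂μ ≤ σ ^ 2) :
    ∫ i, ‖X i‖ ∂μ ≤ ‖∫ i, X i ∂μ‖ + σ := by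
  set m := ∫ i, X i ∂μ
  have hdev : MemLp (fun i => ‖X i - m‖) 2 μ := (hX.sub (memLp_const m)).norm
  have hdev_le : ∫ i, ‖X i - m‖ ∂μ ≤ σ :=
    le_of_sq_le_sq ((sq_integral_le_integral_sq hdev).trans hvar) hσ
  calc ∫ i, ‖X i‖ ∂μ ≤ ∫ i, (‖m‖ + ‖X i - m‖) ∂μ :=
        integral_mono (hX.integrable one_le_two).norm
          ((integrable_const _).add (hdev.integrable one_le_two))
          fun i => norm_le_norm_add_norm_sub' (X i) m
    _ = ‖m‖ + ∫ i, ‖X i - m‖ ∂μ := by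
        rw [integral_add (integrable_const _) (hdev.integrable one_le_two), integral_const]
        simp
    _ ≤ ‖m‖ + σ := by gcongr

lemma mul_norm_integral_le_of_norm_sub_le [IsProbabilityMeasure μ] [NormedSpace ℝ E]
    {X G : I → E} {b : I → ℝ} {q σ : ℝ} (hq : 1 ≤ q) (hσ : 0 ≤ σ) (hX : MemLp X 2 μ)
    (hG : Integrable G μ) (hb : Integrable b μ)
    (hvar : ∫ i, ‖X i - ∫ j, X j ∂μ‖ ^ 2 ∂μ ≤ σ ^ 2)
    (hGX : ∀ i, ‖G i - X i‖ ≤ (q - 1) * (‖X i‖ + b i)) :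
    (2 - q) * ‖∫ i, X i ∂μ‖ ≤ ‖∫ i, G i ∂μ‖ + (q - 1) * (σ + ∫ i, b i ∂μ) := by
  have hX1 : Integrable X μ := hX.integrable one_le_two
  have hmean : ‖∫ i, X i ∂μ - ∫ i, G i ∂μ‖ ≤ (q - 1) * (∫ i, ‖X i‖ ∂μ + ∫ i, b i ∂μ) :=
    calc ‖∫ i, X i ∂μ - ∫ i, G i ∂μ‖ = ‖∫ i, (G i - X i) ∂μ‖ := by
          rw [integral_sub hG hX1, norm_sub_rev]
      _ ≤ ∫ i, ‖G i - X i‖ ∂μ := norm_integral_le_integral_norm _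
      _ ≤ ∫ i, (q - 1) * (‖X i‖ + b i) ∂μ :=
          integral_mono (hG.sub hX1).norm ((hX1.norm.add hb).const_mul _) hGX
      _ = (q - 1) * (∫ i, ‖X i‖ ∂μ + ∫ i, b i ∂μ) := by
          rw [integral_const_mul, integral_add hX1.norm hb]
  have hfirst := integral_norm_le_norm_integral_add hX hσ hvar
  have htri := norm_le_norm_add_norm_sub' (∫ i, X i ∂μ) (∫ i, G i ∂μ)
  nlinarith [mul_le_mul_of_nonneg_left hfirst (sub_nonneg.2 hq)]

lemma integral_norm_sq_le_of_norm_le {X G : I → E} {b : I → ℝ} {q : ℝ}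
    (hX : MemLp X 2 μ) (hG : MemLp G 2 μ) (hb : MemLp b 2 μ)
    (hGX : ∀ i, ‖G i‖ ≤ q * (‖X i‖ + b i)) :
    ∫ i, ‖G i‖ ^ 2 ∂μ ≤ 2 * q ^ 2 * (∫ i, ‖X i‖ ^ 2 ∂μ + ∫ i, b i ^ 2 ∂μ) := by
  have hX2 : Integrable (fun i => ‖X i‖ ^ 2) μ := hX.integrable_norm_pow two_ne_zero
  have hpt : ∀ i, ‖G i‖ ^ 2 ≤ 2 * q ^ 2 * (‖X i‖ ^ 2 + b i ^ 2) := fun i => by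
    have hsq := pow_le_pow_left₀ (norm_nonneg _) (hGX i) 2
    nlinarith [sq_nonneg (‖X i‖ - b i), sq_nonneg q]
  calc ∫ i, ‖G i‖ ^ 2 ∂μ ≤ ∫ i, 2 * q ^ 2 * (‖X i‖ ^ 2 + b i ^ 2) ∂μ :=
        integral_mono (hG.integrable_norm_pow two_ne_zero)
          ((hX2.add hb.integrable_sq).const_mul _) hpt
    _ = 2 * q ^ 2 * (∫ i, ‖X i‖ ^ 2 ∂μ + ∫ i, b i ^ 2 ∂μ) := by
        rw [integral_const_mul, integral_add hX2 hb.integrable_sq]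

lemma integral_norm_sq_le_of_norm_sub_le [IsProbabilityMeasure μ] [InnerProductSpace ℝ E]
    [CompleteSpace E] {X G : I → E} {b : I → ℝ} {q σ : ℝ}
    (hq : 1 ≤ q) (hq2 : q < 2) (hσ : 0 ≤ σ) (hX : MemLp X 2 μ) (hG : MemLp G 2 μ)
    (hb : MemLp b 2 μ) (hb0 : ∀ i, 0 ≤ b i)
    (hvar : ∫ i, ‖X i - ∫ j, X j ∂μ‖ ^ 2 ∂μ ≤ σ ^ 2)
    (hGX : ∀ i, ‖G i - X i‖ ≤ (q - 1) * (‖X i‖ + b i)) :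
    ∫ i, ‖G i‖ ^ 2 ∂μ ≤
      4 * q ^ 2 / (2 - q) ^ 2 * ‖∫ i, G i ∂μ‖ ^ 2 +
        (4 * q ^ 4 * (σ + ∫ i, b i ∂μ) ^ 2 / (2 - q) ^ 2 +
          2 * q ^ 2 * (σ ^ 2 + ∫ i, b i ^ 2 ∂μ)) := by
  set m := ∫ i, X i ∂μ
  set M := ∫ i, G i ∂μ
  set B := ∫ i, b i ∂μ
  have hB : 0 ≤ B := integral_nonneg hb0
  have hGle : ∀ i, ‖G i‖ ≤ q * (‖X i‖ + b i) := fun i => by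
    linarith [norm_le_norm_add_norm_sub' (G i) (X i), hGX i, hb0 i]
  have hsecond : ∫ i, ‖X i‖ ^ 2 ∂μ ≤ ‖m‖ ^ 2 + σ ^ 2 := by
    linarith [integral_norm_sub_integral_sq hX]
  have hmean : (2 - q) * ‖m‖ ≤ ‖M‖ + q * (σ + B) := by
    linarith [mul_norm_integral_le_of_norm_sub_le hq hσ hX (hG.integrable one_le_two)
      (hb.integrable one_le_two) hvar hGX]
  have hm : ‖m‖ ^ 2 ≤ (2 * ‖M‖ ^ 2 + 2 * q ^ 2 * (σ + B) ^ 2) / (2 - q) ^ 2 := by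
    rw [le_div_iff₀ (pow_pos (by linarith) 2)]
    have hsq := pow_le_pow_left₀ (mul_nonneg (by linarith) (norm_nonneg m)) hmean 2
    nlinarith [sq_nonneg (‖M‖ - q * (σ + B))]
  calc ∫ i, ‖G i‖ ^ 2 ∂μ ≤ 2 * q ^ 2 * (∫ i, ‖X i‖ ^ 2 ∂μ + ∫ i, b i ^ 2 ∂μ) :=
        integral_norm_sq_le_of_norm_le hX hG hb hGle
    _ ≤ 2 * q ^ 2 * ((2 * ‖M‖ ^ 2 + 2 * q ^ 2 * (σ + B) ^ 2) / (2 - q) ^ 2 + σ ^ 2 +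
          ∫ i, b i ^ 2 ∂μ) := by gcongr; linarith
    _ = _ := by ring

end Moments

theorem stmt17_general {d : ℕ} (α L σ : ℝ) (hα : 0 < α) (hL : 0 < L) (hσ : 0 < σ)
    (N : ℕ) (hN : 1 ≤ N)
    (hαsmall : α < ((2 : ℝ) ^ ((1 : ℝ) / (2 * (N : ℝ))) - 1) / L)
    {I : Type*} [MeasurableSpace I] (μ : Measure I) [IsProbabilityMeasure μ]
    (lS lT : I → EuclideanSpace ℝ (Fin d) → ℝ)
    (hgradS : ∀ i, ∀ w u : EuclideanSpace ℝ (Fin d),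
      ‖gradient (lS i) w - gradient (lS i) u‖ ≤ L * ‖w - u‖)
    (hgradT : ∀ i, ∀ w u : EuclideanSpace ℝ (Fin d),
      ‖gradient (lT i) w - gradient (lT i) u‖ ≤ L * ‖w - u‖)
    (b : I → ℝ) (hbsq : MemLp b 2 μ)
    (hdiffb : ∀ i, ∀ v : EuclideanSpace ℝ (Fin d),
      ‖gradient (lS i) v - gradient (lT i) v‖ ≤ b i)
    (hgTint : ∀ w : EuclideanSpace ℝ (Fin d), Integrable (fun i => gradient (lT i) w) μ)
    (hgT2int : ∀ w : EuclideanSpace ℝ (Fin d),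
      Integrable (fun i => ‖gradient (lT i) w‖ ^ 2) μ)
    (hG2int : ∀ w : EuclideanSpace ℝ (Fin d),
      Integrable (fun i => ‖metaGrad α N (lS i) (lT i) w‖ ^ 2) μ)
    (hGint : ∀ w : EuclideanSpace ℝ (Fin d),
      Integrable (fun i => metaGrad α N (lS i) (lT i) w) μ)
    (hvar : ∀ w : EuclideanSpace ℝ (Fin d),
      (∫ i, ‖gradient (lT i) w - ∫ i', gradient (lT i') w ∂μ‖ ^ 2 ∂μ) ≤ σ ^ 2) :
    ∀ w : EuclideanSpace ℝ (Fin d),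
      (∫ i, ‖metaGrad α N (lS i) (lT i) w‖ ^ 2 ∂μ) ≤
        (4 * (1 + α * L) ^ (4 * N) / (2 - (1 + α * L) ^ (2 * N)) ^ 2) *
            ‖∫ i, metaGrad α N (lS i) (lT i) w ∂μ‖ ^ 2 +
          (4 * (1 + α * L) ^ (8 * N) * (σ + ∫ i, b i ∂μ) ^ 2 /
              (2 - (1 + α * L) ^ (2 * N)) ^ 2 +
            2 * (1 + α * L) ^ (4 * N) * (σ ^ 2 + ∫ i, (b i) ^ 2 ∂μ)) := by
  intro w
  set q := (1 + α * L) ^ (2 * N)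
  have hq1 : 1 ≤ q := one_le_pow₀ (le_add_of_nonneg_right (by positivity))
  have hq2 : q < 2 := by
    have hroot : 1 + α * L < (2 : ℝ) ^ ((2 * N : ℕ) : ℝ)⁻¹ := by
      rw [lt_div_iff₀ hL] at hαsmall
      push_cast
      rw [inv_eq_one_div]
      linarith
    rwa [Real.lt_rpow_inv_iff_of_pos (by positivity) zero_le_two (by positivity),
      Real.rpow_natCast] at hroot
  have hmemLp {X : I → EuclideanSpace ℝ (Fin d)} (h1 : Integrable X μ)
      (h2 : Integrable (fun i => ‖X i‖ ^ 2) μ) : MemLp X 2 μ :=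
    (memLp_two_iff_integrable_sq_norm h1.aestronglyMeasurable).2 h2
  rw [show (1 + α * L) ^ (4 * N) = q ^ 2 by rw [← pow_mul]; ring_nf,
    show (1 + α * L) ^ (8 * N) = q ^ 4 by rw [← pow_mul]; ring_nf]
  exact integral_norm_sq_le_of_norm_sub_le hq1 hq2 hσ.le (hmemLp (hgTint w) (hgT2int w))
    (hmemLp (hGint w) (hG2int w)) hbsq (fun i => (norm_nonneg _).trans (hdiffb i w)) (hvar w)
    fun i => norm_metaGrad_sub_gradient_le hα.le hL.le (hgradS i) (hgradT i) w (hdiffb i w)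

theorem stmt17 {d : ℕ} (hd : 1 ≤ d) (α L σ : ℝ) (hα : 0 < α) (hL : 0 < L) (hσ : 0 < σ)
    (N : ℕ) (hN : 1 ≤ N)
    (hαsmall : α < ((2 : ℝ) ^ ((1 : ℝ) / (2 * (N : ℝ))) - 1) / L)
    {I : Type*} [MeasurableSpace I] (μ : Measure I) [IsProbabilityMeasure μ]
    (lS lT : I → EuclideanSpace ℝ (Fin d) → ℝ)
    (hlS : ∀ i, ContDiff ℝ 2 (lS i)) (hlT : ∀ i, ContDiff ℝ 2 (lT i))
    (hgradS : ∀ i, ∀ w u : EuclideanSpace ℝ (Fin d),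
      ‖gradient (lS i) w - gradient (lS i) u‖ ≤ L * ‖w - u‖)
    (hgradT : ∀ i, ∀ w u : EuclideanSpace ℝ (Fin d),
      ‖gradient (lT i) w - gradient (lT i) u‖ ≤ L * ‖w - u‖)
    (b : I → ℝ) (hbnn : ∀ i, 0 ≤ b i) (hbsq : MemLp b 2 μ)
    (hdiffb : ∀ i, ∀ v : EuclideanSpace ℝ (Fin d),
      ‖gradient (lS i) v - gradient (lT i) v‖ ≤ b i)
    (hgTint : ∀ w : EuclideanSpace ℝ (Fin d), Integrable (fun i => gradient (lT i) w) μ)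
    (hgT2int : ∀ w : EuclideanSpace ℝ (Fin d),
      Integrable (fun i => ‖gradient (lT i) w‖ ^ 2) μ)
    (hG2int : ∀ w : EuclideanSpace ℝ (Fin d),
      Integrable (fun i => ‖metaGrad α N (lS i) (lT i) w‖ ^ 2) μ)
    (hGint : ∀ w : EuclideanSpace ℝ (Fin d),
      Integrable (fun i => metaGrad α N (lS i) (lT i) w) μ)
    (hvar : ∀ w : EuclideanSpace ℝ (Fin d),
      (∫ i, ‖gradient (lT i) w - ∫ i', gradient (lT i') w ∂μ‖ ^ 2 ∂μ) ≤ σ ^ 2) :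
    ∀ w : EuclideanSpace ℝ (Fin d),
      (∫ i, ‖metaGrad α N (lS i) (lT i) w‖ ^ 2 ∂μ) ≤
        (4 * (1 + α * L) ^ (4 * N) / (2 - (1 + α * L) ^ (2 * N)) ^ 2) *
            ‖∫ i, metaGrad α N (lS i) (lT i) w ∂μ‖ ^ 2 +
          (4 * (1 + α * L) ^ (8 * N) * (σ + ∫ i, b i ∂μ) ^ 2 /
              (2 - (1 + α * L) ^ (2 * N)) ^ 2 +
            2 * (1 + α * L) ^ (4 * N) * (σ ^ 2 + ∫ i, (b i) ^ 2 ∂μ)) :=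
  stmt17_general α L σ hα hL hσ N hN hαsmall μ lS lT hgradS hgradT b hbsq hdiffb hgTint hgT2int
    hG2int hGint hvar
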